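/- For a closed arc configuration with two curvature values κ₊ ≠ κ₋, both nonzero, total phase lengths L₊, L₋ > 0, equal splitting into M pieces per phase, and turning constraint κ₊L₊ + κ₋L₋ = 2πm: if M ≥ 2 and 2πm/M ∉ 2πℤ, the equal-split configuration satisfies both the turning constraint ∑ᵢ Δθᵢ = 2πm and the closure constraint ∑ᵢ vᵢ = 0. -/

import Mathlib

/-!
Every quantity in the configuration is 2-periodic in the arc index up to the rotation
`w = exp (i (Δθ⁺ + Δθ⁻))`: the partial angle sums satisfy `S (i + 2) = S i + Δθ⁺ + Δθ⁻`, so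
`v (i + 2) = w • v i`. Hence `∑ᵢ vᵢ = (1 + w + ⋯ + w ^ (M - 1)) (v₀ + v₁)`. The turning
constraint makes `w` an `M`-th root of unity, and `2πm / M ∉ 2πℤ` says exactly that `w ≠ 1`,
so the geometric sum vanishes.
-/

open Complex Finset

theorem Finset.sum_range_two_mul {α : Type*} [AddCommMonoid α] (f : ℕ → α) (n : ℕ) :
    ∑ i ∈ range (2 * n), f i = ∑ k ∈ range n, (f (2 * k) + f (2 * k + 1)) := by
  induction n with
  | zero => simp
  | succ n ih =>
    rw [show 2 * (n + 1) = 2 * n + 1 + 1 by ring, sum_range_succ, sum_range_succ, ih,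
      sum_range_succ, add_assoc]

theorem sum_range_two_mul_eq_geom_sum_mul {R : Type*} [Semiring R] {g : ℕ → R} {w : R}
    (hg : ∀ i, g (i + 2) = w * g i) (n : ℕ) :
    ∑ i ∈ range (2 * n), g i = (∑ k ∈ range n, w ^ k) * (g 0 + g 1) := by
  have hpow : ∀ k i, g (2 * k + i) = w ^ k * g i := by
    intro k i
    induction k with
    | zero => simp
    | succ k ih => rw [show 2 * (k + 1) + i = 2 * k + i + 2 by ring, hg, ih, pow_succ', mul_assoc]
  rw [sum_range_two_mul, sum_mul]
  refine sum_congr rfl fun k _ => ?_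
  rw [mul_add, ← hpow k 0, ← hpow k 1, add_zero]

theorem geom_sum_eq_zero_of_pow_eq_one {K : Type*} [DivisionRing K] {w : K} {n : ℕ}
    (hw : w ≠ 1) (hwn : w ^ n = 1) : ∑ k ∈ range n, w ^ k = 0 := by
  rw [geom_sum_eq hw, hwn, sub_self, zero_div]

theorem Complex.exp_I_mul_ofReal_eq_one_iff {θ : ℝ} :
    exp (I * θ) = 1 ↔ ∃ n : ℤ, θ = 2 * Real.pi * n := by
  rw [mul_comm, ← Circle.coe_exp, Circle.coe_eq_one, Circle.exp_eq_one]
  simp only [mul_comm]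

section Alternating

variable {α : Type*} (x y : α)

theorem ite_mod_two_add_ite_succ_mod_two [AddCommMagma α] (i : ℕ) :
    ((if i % 2 = 0 then x else y) + if (i + 1) % 2 = 0 then x else y) = x + y := by
  rcases Nat.mod_two_eq_zero_or_one i with h | h <;>
    simp [h, Nat.succ_mod_two_eq_zero_iff, add_comm]

variable [AddCommMonoid α]

theorem sum_range_two_mul_ite_mod_two (n : ℕ) :
    ∑ i ∈ range (2 * n), (if i % 2 = 0 then x else y) = n • (x + y) := by
  simp only [sum_range_two_mul, ite_mod_two_add_ite_succ_mod_two, sum_const, card_range]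

theorem sum_range_add_two_ite_mod_two (i : ℕ) :
    ∑ j ∈ range (i + 2), (if j % 2 = 0 then x else y) =
      ∑ j ∈ range i, (if j % 2 = 0 then x else y) + (x + y) := by
  rw [sum_range_succ, sum_range_succ, add_assoc, ite_mod_two_add_ite_succ_mod_two]

end Alternating

theorem arc_displacement_add_two {S κ : ℕ → ℝ} {c : ℝ} (hS : ∀ i, S (i + 2) = S i + c)
    (hκ : ∀ i, κ (i + 2) = κ i) (i : ℕ) :
    (exp (I * (S (i + 2 + 1) : ℂ)) - exp (I * (S (i + 2) : ℂ))) / (I * (κ (i + 2) : ℂ)) =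
      exp (I * c) * ((exp (I * (S (i + 1) : ℂ)) - exp (I * (S i : ℂ))) / (I * (κ i : ℂ))) := by
  rw [show i + 2 + 1 = i + 1 + 2 by ring, hS, hS, hκ]
  push_cast
  rw [mul_add, mul_add, exp_add, exp_add]
  ring

theorem stmt6_general (M : ℕ) (hM : 2 ≤ M) (m : ℤ) (κp κm Lp Lm : ℝ)
    (hturn : κp * Lp + κm * Lm = 2*Real.pi*(m : ℝ))
    (hnd : ¬ ∃ k : ℤ, 2*Real.pi*(m : ℝ)/(M : ℝ) = 2*Real.pi*(k : ℝ)) :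
    let Δθ : ℕ → ℝ := fun i => if i % 2 = 0 then κp * Lp / (M : ℝ) else κm * Lm / (M : ℝ)
    let S : ℕ → ℝ := fun i => ∑ j ∈ range i, Δθ j
    let κ : ℕ → ℝ := fun i => if i % 2 = 0 then κp else κm
    let v : ℕ → ℂ := fun i =>
      (Complex.exp (I * ((S (i+1) : ℝ) : ℂ)) - Complex.exp (I * ((S i : ℝ) : ℂ))) / (I * ((κ i : ℝ) : ℂ))
    (∑ i ∈ range (2*M), Δθ i = 2*Real.pi*(m : ℝ)) ∧
    (∑ i ∈ range (2*M), v i = 0) := by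
  intro Δθ S κ v
  set θ := κp * Lp / M + κm * Lm / M
  have hθ : θ = 2 * Real.pi * m / M := by rw [← hturn, add_div]
  have hMθ : M * θ = 2 * Real.pi * m := by
    rw [hθ, mul_div_cancel₀ _ (Nat.cast_ne_zero.2 (by omega))]
  have hv : ∀ i, v (i + 2) = exp (I * θ) * v i :=
    arc_displacement_add_two (sum_range_add_two_ite_mod_two _ _)
      (fun i => by simp only [κ, Nat.add_mod_right])
  have hroot : exp (I * θ) ^ M = 1 := by
    rw [← exp_nat_mul, ← mul_assoc, mul_comm _ I, mul_assoc, ← ofReal_natCast, ← ofReal_mul, hMθ,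
      exp_I_mul_ofReal_eq_one_iff]
    exact ⟨m, rfl⟩
  have hne : exp (I * θ) ≠ 1 := by
    rwa [ne_eq, exp_I_mul_ofReal_eq_one_iff, hθ]
  refine ⟨?_, ?_⟩
  · rw [sum_range_two_mul_ite_mod_two, nsmul_eq_mul, hMθ]
  · rw [sum_range_two_mul_eq_geom_sum_mul hv, geom_sum_eq_zero_of_pow_eq_one hne hroot, zero_mul]

/-- The equal-split alternating-arc configuration with two nonzero curvature
values `κ₊ ≠ κ₋`, phase lengths `L₊, L₋ > 0`, `M ≥ 2` pieces per phase, and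
turning constraint `κ₊L₊ + κ₋L₋ = 2πm` (with `2πm/M ∉ 2πℤ`) satisfies both the
turning constraint `∑ᵢ Δθᵢ = 2πm` and the closure constraint `∑ᵢ vᵢ = 0`. -/
theorem stmt6 (M : ℕ) (hM : 2 ≤ M) (m : ℤ) (κp κm Lp Lm : ℝ)
    (hκp : κp ≠ 0) (hκm : κm ≠ 0) (hLp : 0 < Lp) (hLm : 0 < Lm)
    (hκdist : κp ≠ κm)
    (hturn : κp * Lp + κm * Lm = 2*Real.pi*(m : ℝ))
    (hnd : ¬ ∃ k : ℤ, 2*Real.pi*(m : ℝ)/(M : ℝ) = 2*Real.pi*(k : ℝ)) :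
    let Δθ : ℕ → ℝ := fun i => if i % 2 = 0 then κp * Lp / (M : ℝ) else κm * Lm / (M : ℝ)
    let S : ℕ → ℝ := fun i => ∑ j ∈ range i, Δθ j
    let κ : ℕ → ℝ := fun i => if i % 2 = 0 then κp else κm
    let v : ℕ → ℂ := fun i =>
      (Complex.exp (I * ((S (i+1) : ℝ) : ℂ)) - Complex.exp (I * ((S i : ℝ) : ℂ))) / (I * ((κ i : ℝ) : ℂ))
    (∑ i ∈ range (2*M), Δθ i = 2*Real.pi*(m : ℝ)) ∧
    (∑ i ∈ range (2*M), v i = 0) :=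
  stmt6_general M hM m κp κm Lp Lm hturn hnd
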